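/- For every natural number n, the identity ∑_{k=0}^{n} (3/(k+2)) · C(2k, k+1) = (2/(n+2)) · C(2n+1, n) − 1 holds, where both sides are interpreted as rational numbers. -/

import Mathlib

/-!
Both sides are Catalan numbers in disguise: `2/(n+2) · C(2n+1, n) = Cat(n+1)` and
`3/(k+2) · C(2k, k+1) = Cat(k+1) - Cat(k)`, so the sum telescopes to `Cat(n+1) - Cat(0)`.
-/

open Nat

theorem centralBinom_succ_eq_two_mul_choose (n : ℕ) :
    centralBinom (n + 1) = 2 * (2 * n + 1).choose n := by
  rw [centralBinom_eq_two_mul_choose, mul_add_one, choose_succ_succ', choose_symm_half, ← two_mul]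

theorem cast_catalan_eq_centralBinom_div (n : ℕ) :
    (catalan n : ℚ) = centralBinom n / (n + 1) := by
  rw [eq_div_iff (by positivity), ← succ_mul_catalan_eq_centralBinom]
  push_cast
  ring

theorem cast_catalan_succ_eq_choose (n : ℕ) :
    (catalan (n + 1) : ℚ) = 2 / (n + 2) * (2 * n + 1).choose n := by
  rw [cast_catalan_eq_centralBinom_div, centralBinom_succ_eq_two_mul_choose]
  push_cast
  ring

theorem cast_catalan_succ_sub_catalan (k : ℕ) :
    (catalan (k + 1) : ℚ) - catalan k = 3 / (k + 2) * (2 * k).choose (k + 1) := by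
  have hchoose : ((2 * k).choose (k + 1) : ℚ) = centralBinom k * k / (k + 1) := by
    rw [eq_div_iff (by positivity), centralBinom_eq_two_mul_choose]
    exact_mod_cast (choose_succ_right_eq (2 * k) k).trans (by rw [two_mul, Nat.add_sub_cancel])
  have hcentral : (centralBinom (k + 1) : ℚ) = 2 * (2 * k + 1) * centralBinom k / (k + 1) := by
    rw [eq_div_iff (by positivity), mul_comm]
    exact_mod_cast succ_mul_centralBinom_succ k
  rw [cast_catalan_eq_centralBinom_div, cast_catalan_eq_centralBinom_div, hchoose, hcentral]
  push_cast
  field_simp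
  ring

theorem combiwalk7_special (n : ℕ) :
    ∑ k ∈ Finset.range (n + 1),
      (3 / ((k : ℚ) + 2)) * (Nat.choose (2 * k) (k + 1) : ℚ)
    = 2 / ((n : ℚ) + 2) * (Nat.choose (2 * n + 1) n : ℚ) - 1 := by
  simp_rw [← cast_catalan_succ_sub_catalan]
  rw [Finset.sum_range_sub (fun i ↦ (catalan i : ℚ)), ← cast_catalan_succ_eq_choose,
    catalan_zero, cast_one]
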